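/- Let c ≥ 1 and p ∈ [1,∞] be fixed, and let K_λ be given by K_λ(x) := λ^{−9/(4c)} (1 + (λ^κ | |x|_c^c − λ|)^{10})^{−1} with κ = 3/(4c) − 1 and |x|_c^c = |x₁|^c+|x₂|^c+|x₃|^c. For f : ℤ³ → ℂ define its extension F_f : ℝ³ → ℂ by F_f(x) := Σ_{y∈ℤ³} f(y) 𝟙_{[−1/2,1/2)³}(x−y). Then there is a constant C > 0 such that for every subset 𝕀 ⊆ [1,∞) and every f : ℤ³ → ℂ, ‖ sup_{λ∈𝕀} |K_λ ∗ f| ‖_{ℓ^p(ℤ³)} ≤ C ‖ sup_{λ∈𝕀} K_λ ∗ |F_f| ‖_{L^p(ℝ³)}, where K_λ ∗ f(x) = Σ_{y∈ℤ³} K_λ(x−y) f(y) on ℤ³ and K_λ ∗ |F_f|(x) = ∫_{ℝ³} K_λ(x−y) |F_f(y)| dy on ℝ³. -/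

import Mathlib

open Real MeasureTheory

/-- The major-arc kernel
`K_λ(x) = λ^{−9/(4c)} (1 + (λ^κ | |x|_c^c − λ|)^{10})⁻¹` with `κ = 3/(4c) − 1`. -/
noncomputable def majorKernel (c lam : ℝ) (x : ℝ × ℝ × ℝ) : ℝ :=
  lam ^ (-(9 : ℝ) / (4 * c)) *
    (1 + (lam ^ (3 / (4 * c) - 1) *
        |(|x.1| ^ c + |x.2.1| ^ c + |x.2.2| ^ c) - lam|) ^ 10)⁻¹

/-- The extension `F_f(x) = Σ_{y∈ℤ³} f(y) 𝟙_{[−1/2,1/2)³}(x−y)` of `f : ℤ³ → ℂ` to `ℝ³`. -/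
noncomputable def latticeExtension (f : ℤ × ℤ × ℤ → ℂ) (x : ℝ × ℝ × ℝ) : ℂ :=
  ∑' y : ℤ × ℤ × ℤ,
    if (-(1 : ℝ) / 2 ≤ x.1 - (y.1 : ℝ) ∧ x.1 - (y.1 : ℝ) < 1 / 2) ∧
        (-(1 : ℝ) / 2 ≤ x.2.1 - (y.2.1 : ℝ) ∧ x.2.1 - (y.2.1 : ℝ) < 1 / 2) ∧
        (-(1 : ℝ) / 2 ≤ x.2.2 - (y.2.2 : ℝ) ∧ x.2.2 - (y.2.2 : ℝ) < 1 / 2)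
    then f y else 0

/-- The `L^p` norm (with values in `ℝ≥0∞`) of an `ℝ≥0∞`-valued function,
covering also `p = ∞` via the essential supremum. -/
noncomputable def lpNormE {α : Type*} [MeasurableSpace α] (g : α → ENNReal)
    (p : ENNReal) (μ : Measure α) : ENNReal :=
  if p = ⊤ then essSup g μ else (∫⁻ x, g x ^ p.toReal ∂μ) ^ (1 / p.toReal)

/-!
Every `t ∈ ℝ³` lies in the half-open unit cube around the lattice point `⌊t⌉` obtained by
rounding its coordinates, and rounding pushes Lebesgue measure forward to counting measure on
`ℤ³`. Hence the `ℓ^p(ℤ³)` norm of the discrete maximal function equals the `L^p(ℝ³)` norm of its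
composition with rounding, and it suffices to bound `|K_λ ∗ f|(⌊t⌉)` pointwise by
`C · (K_λ ∗ |F_f|)(t)`. Writing the lattice sum as an integral of `K_λ(⌊t⌉ - ⌊y⌉) |F_f(y)|`, this
follows once `K_λ(u) ≤ C K_λ(u + w)` for `‖w‖_∞ ≤ 1`, uniformly in `λ ≥ 1`. A shift of size one
moves `|u|_c^c` by `O(R^{1 - 1/c})` where `R = λ + A`, `A = ||u|_c^c - λ|`, and since
`κ + 1 - 1/c = -1/(4c) ≤ 0` the weight `λ^κ` turns this into `O(1 + λ^κ A)`.
-/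

open scoped ENNReal

noncomputable def latticeRound (x : ℝ × ℝ × ℝ) : ℤ × ℤ × ℤ := (round x.1, round x.2.1, round x.2.2)

def latticeCoe (z : ℤ × ℤ × ℤ) : ℝ × ℝ × ℝ := (z.1, z.2.1, z.2.2)

lemma latticeCoe_sub (z z' : ℤ × ℤ × ℤ) :
    latticeCoe (z - z') = latticeCoe z - latticeCoe z' := by
  simp only [latticeCoe, Prod.fst_sub, Prod.snd_sub, Int.cast_sub, Prod.mk_sub_mk]

lemma norm_sub_latticeCoe_latticeRound_le (x : ℝ × ℝ × ℝ) :
    ‖x - latticeCoe (latticeRound x)‖ ≤ 1 / 2 :=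
  norm_prod_le_iff.2 ⟨abs_sub_round _, norm_prod_le_iff.2 ⟨abs_sub_round _, abs_sub_round _⟩⟩

lemma norm_sub_sub_latticeCoe_sub_le (x y : ℝ × ℝ × ℝ) :
    ‖(x - y) - latticeCoe (latticeRound x - latticeRound y)‖ ≤ 1 := by
  rw [latticeCoe_sub, sub_sub_sub_comm]
  linarith [norm_sub_le (x - latticeCoe (latticeRound x)) (y - latticeCoe (latticeRound y)),
    norm_sub_latticeCoe_latticeRound_le x, norm_sub_latticeCoe_latticeRound_le y]

lemma latticeRound_preimage_singleton (z : ℤ × ℤ × ℤ) :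
    latticeRound ⁻¹' {z} = Set.Ico ((z.1 : ℝ) - 1 / 2) (z.1 + 1 / 2) ×ˢ
      (Set.Ico ((z.2.1 : ℝ) - 1 / 2) (z.2.1 + 1 / 2) ×ˢ
        Set.Ico ((z.2.2 : ℝ) - 1 / 2) (z.2.2 + 1 / 2)) := by
  ext x
  simp only [Set.mem_preimage, Set.mem_singleton_iff, latticeRound, Prod.ext_iff,
    round_eq_iff, Set.mem_prod]

lemma measurable_latticeRound : Measurable latticeRound :=
  measurable_to_countable' fun z => by
    rw [latticeRound_preimage_singleton]
    exact measurableSet_Ico.prod (measurableSet_Ico.prod measurableSet_Ico)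

lemma map_latticeRound_volume : volume.map latticeRound = Measure.count := by
  refine Measure.ext_of_singleton fun z => ?_
  rw [Measure.map_apply measurable_latticeRound (measurableSet_singleton z),
    latticeRound_preimage_singleton, Measure.count_singleton, Measure.volume_eq_prod,
    Measure.prod_prod, Measure.volume_eq_prod, Measure.prod_prod]
  simp only [Real.volume_Ico]
  norm_num

lemma tsum_eq_lintegral_comp_latticeRound (h : ℤ × ℤ × ℤ → ℝ≥0∞) :
    ∑' z, h z = ∫⁻ x, h (latticeRound x) := by
  rw [← lintegral_count, ← map_latticeRound_volume,
    lintegral_map (Measurable.of_discrete) measurable_latticeRound]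

lemma latticeExtension_eq (f : ℤ × ℤ × ℤ → ℂ) (x : ℝ × ℝ × ℝ) :
    latticeExtension f x = f (latticeRound x) := by
  have cube_iff (z : ℤ × ℤ × ℤ) :
      ((-(1 : ℝ) / 2 ≤ x.1 - (z.1 : ℝ) ∧ x.1 - (z.1 : ℝ) < 1 / 2) ∧
        (-(1 : ℝ) / 2 ≤ x.2.1 - (z.2.1 : ℝ) ∧ x.2.1 - (z.2.1 : ℝ) < 1 / 2) ∧
        (-(1 : ℝ) / 2 ≤ x.2.2 - (z.2.2 : ℝ) ∧ x.2.2 - (z.2.2 : ℝ) < 1 / 2)) ↔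
        latticeRound x = z := by
    simp only [latticeRound, Prod.ext_iff, round_eq_iff, Set.mem_Ico]
    constructor <;> rintro ⟨⟨_, _⟩, ⟨_, _⟩, _, _⟩ <;>
      refine ⟨⟨?_, ?_⟩, ⟨?_, ?_⟩, ?_, ?_⟩ <;> linarith
  rw [latticeExtension, tsum_eq_single (latticeRound x)
    fun z hz => if_neg fun h => hz ((cube_iff z).1 h).symm, if_pos ((cube_iff _).2 rfl)]

section LpNorm

variable {α β : Type*} [MeasurableSpace α] [MeasurableSpace β] {p : ℝ≥0∞} {μ : Measure α}

lemma lpNormE_mono {g h : α → ℝ≥0∞} (hgh : ∀ x, g x ≤ h x) :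
    lpNormE g p μ ≤ lpNormE h p μ := by
  unfold lpNormE
  split_ifs
  · exact essSup_mono_ae (ae_of_all _ hgh)
  · gcongr with x
    exact hgh x

lemma lpNormE_const_mul (hp : p ≠ 0) {C : ℝ≥0∞} (hC : C ≠ ⊤) (g : α → ℝ≥0∞) :
    lpNormE (fun x => C * g x) p μ = C * lpNormE g p μ := by
  unfold lpNormE
  split_ifs with hp_top
  · exact ENNReal.essSup_const_mul
  · have hq : 0 < p.toReal := ENNReal.toReal_pos hp hp_top
    simp_rw [ENNReal.mul_rpow_of_nonneg _ _ hq.le]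
    rw [lintegral_const_mul' _ _ (ENNReal.rpow_ne_top_of_nonneg hq.le hC),
      ENNReal.mul_rpow_of_nonneg _ _ (by positivity), ← ENNReal.rpow_mul,
      mul_one_div_cancel hq.ne', ENNReal.rpow_one]

lemma lpNormE_map {f : α → β} (hf : Measurable f) {g : β → ℝ≥0∞} (hg : Measurable g) :
    lpNormE g p (μ.map f) = lpNormE (g ∘ f) p μ := by
  unfold lpNormE
  split_ifs
  · exact essSup_map_measure hg.aemeasurable hf.aemeasurable
  · rw [lintegral_map (hg.pow_const _) hf]
    rfl

end LpNorm

lemma rpow_sub_rpow_le_mul_sub {c x y : ℝ} (hc : 1 ≤ c) (hy : 0 ≤ y) (hyx : y ≤ x) :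
    x ^ c - y ^ c ≤ c * x ^ (c - 1) * (x - y) := by
  obtain rfl | hx := (hy.trans hyx).eq_or_lt
  · obtain rfl : y = 0 := le_antisymm hyx hy
    simp
  have hyx' : -1 ≤ y / x - 1 := by linarith [div_nonneg hy hx.le]
  have bernoulli := one_add_mul_self_le_rpow_one_add hyx' hc
  rw [add_sub_cancel, Real.div_rpow hy hx.le, le_div_iff₀ (by positivity)] at bernoulli
  have hxc : x ^ c = x ^ (c - 1) * x := by
    rw [← Real.rpow_add_one hx.ne', sub_add_cancel]
  calc x ^ c - y ^ c ≤ x ^ c - (1 + c * (y / x - 1)) * x ^ c := by linarith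
    _ = c * x ^ (c - 1) * (x - y) := by rw [hxc]; field_simp; ring

lemma abs_rpow_sub_rpow_le {c x y R : ℝ} (hc : 1 ≤ c) (hx : 0 ≤ x) (hy : 0 ≤ y)
    (hxR : x ≤ R) (hyR : y ≤ R) : |x ^ c - y ^ c| ≤ c * R ^ (c - 1) * |x - y| := by
  wlog hyx : y ≤ x generalizing x y
  · rw [abs_sub_comm, abs_sub_comm x]
    exact this hy hx hyR hxR (le_of_not_ge hyx)
  rw [abs_of_nonneg (sub_nonneg.2 (Real.rpow_le_rpow hy hyx (by linarith))),
    abs_of_nonneg (sub_nonneg.2 hyx)]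
  calc x ^ c - y ^ c ≤ c * x ^ (c - 1) * (x - y) := rpow_sub_rpow_le_mul_sub hc hy hyx
    _ ≤ c * R ^ (c - 1) * (x - y) := by gcongr

lemma abs_abs_add_rpow_sub_le {c a b R : ℝ} (hc : 1 ≤ c) (hb : |b| ≤ 1) (ha : |a| ^ c ≤ R)
    (hR : 1 ≤ R) : |(|a + b| ^ c - |a| ^ c)| ≤ c * 2 ^ (c - 1) * R ^ ((c - 1) / c) := by
  have hc0 : 0 < c := by linarith
  set r := R ^ c⁻¹
  have har : |a| ≤ r := (Real.le_rpow_inv_iff_of_pos (abs_nonneg a) (by linarith) hc0).2 ha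
  have hr : 1 ≤ r := Real.one_le_rpow hR (inv_nonneg.2 hc0.le)
  have habr : |a + b| ≤ 2 * r := by linarith [abs_add_le a b]
  calc |(|a + b| ^ c - |a| ^ c)| ≤ c * (2 * r) ^ (c - 1) * |(|a + b| - |a|)| :=
        abs_rpow_sub_rpow_le hc (abs_nonneg _) (abs_nonneg _) habr (by linarith)
    _ ≤ c * (2 * r) ^ (c - 1) * 1 := by
      gcongr
      exact (abs_abs_sub_abs_le_abs_sub _ _).trans (by simpa using hb)
    _ = c * 2 ^ (c - 1) * R ^ ((c - 1) / c) := by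
      rw [mul_one, Real.mul_rpow zero_le_two (by linarith), ← Real.rpow_mul (by linarith),
        inv_mul_eq_div, mul_assoc]

lemma rpow_mul_add_rpow_le {lam A κ θ : ℝ} (hlam : 1 ≤ lam) (hA : 0 ≤ A) (hκ : κ ≤ 0)
    (hθ₀ : 0 ≤ θ) (hθ₁ : θ ≤ 1) (hκθ : κ + θ ≤ 0) :
    lam ^ κ * (lam + A) ^ θ ≤ 2 + lam ^ κ * A := by
  have hlam0 : 0 < lam := by linarith
  set B := lam ^ κ * A
  have hB : 0 ≤ B := by positivity
  have hlam_part : lam ^ κ * lam ^ θ ≤ 1 := by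
    rw [← Real.rpow_add hlam0]
    exact Real.rpow_le_one_of_one_le_of_nonpos hlam hκθ
  have hA_part : lam ^ κ * A ^ θ ≤ 1 + B := by
    have hsplit : lam ^ κ * A ^ θ = B ^ θ * lam ^ (κ * (1 - θ)) := by
      rw [Real.mul_rpow (by positivity) hA, ← Real.rpow_mul hlam0.le, mul_right_comm,
        ← Real.rpow_add hlam0]
      ring_nf
    calc lam ^ κ * A ^ θ = B ^ θ * lam ^ (κ * (1 - θ)) := hsplit
      _ ≤ (1 + B) ^ θ * 1 := by
        gcongr
        · linarith
        · exact Real.rpow_le_one_of_one_le_of_nonpos hlam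
            (mul_nonpos_of_nonpos_of_nonneg hκ (by linarith))
      _ ≤ (1 + B) ^ (1 : ℝ) := by
        rw [mul_one]
        exact Real.rpow_le_rpow_of_exponent_le (by linarith) hθ₁
      _ = 1 + B := Real.rpow_one _
  calc lam ^ κ * (lam + A) ^ θ ≤ lam ^ κ * (lam ^ θ + A ^ θ) := by
        gcongr
        exact Real.rpow_add_le_add_rpow hlam0.le hA hθ₀ hθ₁
    _ ≤ 2 + B := by linarith

lemma one_add_pow_le_of_le_mul_one_add {B B' M : ℝ} (hB : 0 ≤ B) (hB' : 0 ≤ B') (hM : 0 ≤ M)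
    (h : B' ≤ M * (1 + B)) {n : ℕ} (hn : n ≠ 0) :
    1 + B' ^ n ≤ (2 * (1 + M)) ^ n * (1 + B ^ n) := by
  calc 1 + B' ^ n ≤ (1 + B') ^ n := by simpa using pow_add_pow_le zero_le_one hB' hn
    _ ≤ ((1 + M) * (1 + B)) ^ n := by gcongr; nlinarith
    _ = (1 + M) ^ n * (1 + B) ^ n := mul_pow _ _ _
    _ ≤ (1 + M) ^ n * (2 ^ (n - 1) * (1 + B ^ n)) := by
      gcongr
      simpa using add_pow_le zero_le_one hB n
    _ ≤ (1 + M) ^ n * (2 ^ n * (1 + B ^ n)) := by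
      gcongr
      exacts [one_le_two, Nat.sub_le n 1]
    _ = (2 * (1 + M)) ^ n * (1 + B ^ n) := by rw [mul_pow]; ring

noncomputable def sumAbsRpow (c : ℝ) (x : ℝ × ℝ × ℝ) : ℝ := |x.1| ^ c + |x.2.1| ^ c + |x.2.2| ^ c

noncomputable def scaledSphereDist (c lam : ℝ) (x : ℝ × ℝ × ℝ) : ℝ :=
  lam ^ (3 / (4 * c) - 1) * |sumAbsRpow c x - lam|

lemma majorKernel_eq (c lam : ℝ) (x : ℝ × ℝ × ℝ) :
    majorKernel c lam x = lam ^ (-(9 : ℝ) / (4 * c)) * (1 + scaledSphereDist c lam x ^ 10)⁻¹ :=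
  rfl

lemma scaledSphereDist_nonneg {c lam : ℝ} (hlam : 0 ≤ lam) (x : ℝ × ℝ × ℝ) :
    0 ≤ scaledSphereDist c lam x := by
  unfold scaledSphereDist
  positivity

lemma majorKernel_nonneg {c lam : ℝ} (hlam : 0 ≤ lam) (x : ℝ × ℝ × ℝ) :
    0 ≤ majorKernel c lam x := by
  have := scaledSphereDist_nonneg (c := c) hlam x
  rw [majorKernel_eq]
  positivity

lemma abs_sumAbsRpow_add_sub_le {c R : ℝ} (hc : 1 ≤ c) {u w : ℝ × ℝ × ℝ} (hw : ‖w‖ ≤ 1)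
    (hu : sumAbsRpow c u ≤ R) (hR : 1 ≤ R) :
    |sumAbsRpow c (u + w) - sumAbsRpow c u| ≤ 3 * (c * 2 ^ (c - 1) * R ^ ((c - 1) / c)) := by
  have h₁ := Real.rpow_nonneg (abs_nonneg u.1) c
  have h₂ := Real.rpow_nonneg (abs_nonneg u.2.1) c
  have h₃ := Real.rpow_nonneg (abs_nonneg u.2.2) c
  unfold sumAbsRpow at hu
  have hw₂ : ‖w.2‖ ≤ 1 := (norm_snd_le w).trans hw
  have e₁ := abs_abs_add_rpow_sub_le (a := u.1) hc ((norm_fst_le w).trans hw) (by linarith) hR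
  have e₂ := abs_abs_add_rpow_sub_le (a := u.2.1) hc ((norm_fst_le w.2).trans hw₂)
    (by linarith) hR
  have e₃ := abs_abs_add_rpow_sub_le (a := u.2.2) hc ((norm_snd_le w.2).trans hw₂)
    (by linarith) hR
  have hsplit : sumAbsRpow c (u + w) - sumAbsRpow c u =
      (|u.1 + w.1| ^ c - |u.1| ^ c) + (|u.2.1 + w.2.1| ^ c - |u.2.1| ^ c) +
        (|u.2.2 + w.2.2| ^ c - |u.2.2| ^ c) := by
    simp only [sumAbsRpow, Prod.fst_add, Prod.snd_add]
    ring
  rw [hsplit]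
  exact (abs_add_three _ _ _).trans (by linarith)

lemma scaledSphereDist_add_le {c lam : ℝ} (hc : 1 ≤ c) (hlam : 1 ≤ lam) {u w : ℝ × ℝ × ℝ}
    (hw : ‖w‖ ≤ 1) :
    scaledSphereDist c lam (u + w) ≤ (1 + 3 * c * 2 ^ c) * (1 + scaledSphereDist c lam u) := by
  have hc0 : 0 < c := by linarith
  have hκ : 3 / (4 * c) - 1 ≤ 0 := by
    have : 3 / (4 * c) ≤ 1 := by rw [div_le_one (by positivity)]; linarith
    linarith
  have hθ₀ : 0 ≤ (c - 1) / c := div_nonneg (by linarith) hc0.le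
  have hθ₁ : (c - 1) / c ≤ 1 := (div_le_one hc0).2 (by linarith)
  have hκθ : 3 / (4 * c) - 1 + (c - 1) / c ≤ 0 := by
    have : 3 / (4 * c) - 1 + (c - 1) / c = -1 / (4 * c) := by field_simp; ring
    rw [this]
    exact div_nonpos_of_nonpos_of_nonneg (by norm_num) (by positivity)
  unfold scaledSphereDist
  set κ := 3 / (4 * c) - 1
  set θ := (c - 1) / c
  set A := |sumAbsRpow c u - lam|
  have hA : 0 ≤ A := abs_nonneg _
  have hSR : sumAbsRpow c u ≤ lam + A := by linarith [le_abs_self (sumAbsRpow c u - lam)]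
  have hΔ := abs_sumAbsRpow_add_sub_le hc hw hSR (by linarith)
  have hexp := rpow_mul_add_rpow_le hlam hA hκ hθ₀ hθ₁ hκθ
  have hlamκ : 0 ≤ lam ^ κ := by positivity
  have htwo : (2 : ℝ) ^ c = 2 * 2 ^ (c - 1) := by
    rw [← Real.rpow_one_add' zero_le_two (by linarith), add_sub_cancel]
  have hK : 0 ≤ 3 * c * 2 ^ (c - 1) := by positivity
  calc lam ^ κ * |sumAbsRpow c (u + w) - lam|
      ≤ lam ^ κ * (A + 3 * (c * 2 ^ (c - 1) * (lam + A) ^ θ)) := by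
        refine mul_le_mul_of_nonneg_left ?_ hlamκ
        linarith [abs_sub_le (sumAbsRpow c (u + w)) (sumAbsRpow c u) lam]
    _ = lam ^ κ * A + 3 * c * 2 ^ (c - 1) * (lam ^ κ * (lam + A) ^ θ) := by ring
    _ ≤ lam ^ κ * A + 3 * c * 2 ^ (c - 1) * (2 + lam ^ κ * A) := by gcongr
    _ ≤ (1 + 3 * c * 2 ^ c) * (1 + lam ^ κ * A) := by
      rw [htwo]
      nlinarith [mul_nonneg hK (mul_nonneg hlamκ hA)]

lemma exists_majorKernel_le_mul_majorKernel_add {c : ℝ} (hc : 1 ≤ c) :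
    ∃ C : ℝ, 0 < C ∧ ∀ lam : ℝ, 1 ≤ lam → ∀ u w : ℝ × ℝ × ℝ, ‖w‖ ≤ 1 →
      majorKernel c lam u ≤ C * majorKernel c lam (u + w) := by
  set M := 1 + 3 * c * 2 ^ c
  have hM : 0 ≤ M := by positivity
  refine ⟨(2 * (1 + M)) ^ 10, by positivity, fun lam hlam u w hw => ?_⟩
  have hD := scaledSphereDist_nonneg (c := c) (zero_le_one.trans hlam)
  have hcmp := one_add_pow_le_of_le_mul_one_add (hD u) (hD (u + w)) hM
    (scaledSphereDist_add_le hc hlam hw) (n := 10) (by norm_num)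
  rw [majorKernel_eq, majorKernel_eq, mul_left_comm]
  gcongr
  rw [← div_eq_mul_inv, le_div_iff₀ (by positivity), inv_mul_le_iff₀ (by positivity)]
  linarith

lemma enorm_tsum_latticeConv_le {K : ℝ × ℝ × ℝ → ℝ} (hK₀ : ∀ x, 0 ≤ K x) {C : ℝ}
    (hK : ∀ u w : ℝ × ℝ × ℝ, ‖w‖ ≤ 1 → K u ≤ C * K (u + w)) (f : ℤ × ℤ × ℤ → ℂ)
    (t : ℝ × ℝ × ℝ) :
    ‖∑' z, (K (latticeCoe (latticeRound t - z)) : ℂ) * f z‖ₑ ≤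
      ENNReal.ofReal C * ∫⁻ y, ENNReal.ofReal (K (t - y)) * ‖latticeExtension f y‖ₑ := by
  have hcmp (y : ℝ × ℝ × ℝ) :
      K (latticeCoe (latticeRound t - latticeRound y)) ≤ C * K (t - y) := by
    have := hK (latticeCoe (latticeRound t - latticeRound y)) _
      (norm_sub_sub_latticeCoe_sub_le t y)
    rwa [add_sub_cancel] at this
  calc ‖∑' z, (K (latticeCoe (latticeRound t - z)) : ℂ) * f z‖ₑ
      ≤ ∑' z, ENNReal.ofReal (K (latticeCoe (latticeRound t - z))) * ‖f z‖ₑ := by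
        refine enorm_tsum_le_tsum_enorm.trans_eq (tsum_congr fun z => ?_)
        rw [enorm_mul, ← ofReal_norm, Complex.norm_real, Real.norm_of_nonneg (hK₀ _)]
    _ = ∫⁻ y, ENNReal.ofReal (K (latticeCoe (latticeRound t - latticeRound y))) *
          ‖latticeExtension f y‖ₑ := by
        simp only [tsum_eq_lintegral_comp_latticeRound, latticeExtension_eq]
    _ ≤ ∫⁻ y, ENNReal.ofReal C * (ENNReal.ofReal (K (t - y)) * ‖latticeExtension f y‖ₑ) := by
        refine lintegral_mono fun y => ?_
        rw [← mul_assoc, ← ENNReal.ofReal_mul' (hK₀ _)]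
        gcongr
        exact hcmp y
    _ = _ := lintegral_const_mul' _ _ ENNReal.ofReal_ne_top

/-- Lemma `norm`, the comparison principle. For `c ≥ 1` and
`p ∈ [1,∞]`, for any `𝕀 ⊆ [1,∞)` and any `f : ℤ³ → ℂ`,
`‖sup_{λ∈𝕀} |K_λ ∗ f|‖_{ℓ^p(ℤ³)} ≤ C ‖sup_{λ∈𝕀} K_λ ∗ |F_f|‖_{L^p(ℝ³)}`. -/
theorem discrete_continuous_comparison
    (c : ℝ) (hc : 1 ≤ c) (p : ENNReal) (hp : 1 ≤ p) :
    ∃ C : ℝ, 0 < C ∧ ∀ I : Set ℝ, I ⊆ Set.Ici 1 → ∀ f : ℤ × ℤ × ℤ → ℂ,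
      lpNormE (fun x : ℤ × ℤ × ℤ =>
          ⨆ lam ∈ I,
            (‖∑' y : ℤ × ℤ × ℤ,
                ((majorKernel c lam
                    (((x.1 - y.1 : ℤ) : ℝ), ((x.2.1 - y.2.1 : ℤ) : ℝ),
                      ((x.2.2 - y.2.2 : ℤ) : ℝ)) : ℝ) : ℂ) * f y‖₊ : ENNReal))
        p Measure.count
      ≤ ENNReal.ofReal C *
        lpNormE (fun x : ℝ × ℝ × ℝ =>
            ⨆ lam ∈ I,
              ∫⁻ y : ℝ × ℝ × ℝ,
                ENNReal.ofReal (majorKernel c lam (x - y)) *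
                  (‖latticeExtension f y‖₊ : ENNReal))
          p volume := by
  obtain ⟨C, hC, hK⟩ := exists_majorKernel_le_mul_majorKernel_add hc
  refine ⟨C, hC, fun I hI f => ?_⟩
  rw [← map_latticeRound_volume, lpNormE_map measurable_latticeRound Measurable.of_discrete,
    ← lpNormE_const_mul (zero_lt_one.trans_le hp).ne' ENNReal.ofReal_ne_top]
  refine lpNormE_mono fun t => iSup₂_le fun lam hlamI => ?_
  have hlam : 1 ≤ lam := hI hlamI
  refine (enorm_tsum_latticeConv_le (majorKernel_nonneg (by linarith)) (hK lam hlam) f t).trans ?_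
  gcongr
  exact le_biSup (fun lam => ∫⁻ y, _) hlamI
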